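/- Let Z be a finite set with |Z| = D, let A be a column-stochastic D × D matrix with entries in [0,1] (each column sums to 1), and fix z ∈ Z^m. Let Ŵ = (Ŵ_1,…,Ŵ_m) have independent components with P(Ŵ_i = w) = A[w, z_i]. Then for every w ∈ Z, E[T_{Ŵ}(w)] = (A·T_z)(w), Var[T_{Ŵ}(w)] = (1/m)·∑_{z'∈Z} T_z(z')·A[w,z']·(1 − A[w,z']), and the expected perturbation error satisfies E‖T_{Ŵ} − A·T_z‖₂ ≤ 1/√m. -/

import Mathlib

open Finset

/-- The type (empirical distribution) of a sequence `z ∈ Z^m`. -/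
noncomputable def typeOf {Z : Type*} [DecidableEq Z] {m : ℕ} (z : Fin m → Z) : Z → ℝ :=
  fun a => ((Finset.univ.filter fun i => z i = a).card : ℝ) / m

/-!
The weight `∏ i, A (ŷ i) (z i)` makes the coordinates of `ŷ` independent with laws
`A (·) (z i)`, and `T_ŷ(w) - (A·T_z)(w) = (1/m) ∑ i (1[ŷ i = w] - A w (z i))` is a sum of
independent centred Bernoulli variables. Cross terms vanish in its second moment, which is
therefore `(1/m²) ∑ i A w (z i) (1 - A w (z i))`. Summed over `w`, each column contributes
`∑ w A w a (1 - A w a) = 1 - ∑ w (A w a)² ≤ 1`, so `E‖T_ŷ - A·T_z‖₂² ≤ 1/m`, and Jensen's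
inequality for the concave square root gives the bound on `E‖T_ŷ - A·T_z‖₂`.
-/

section ProductWeights

variable {ι Z : Type*} [Fintype ι] [DecidableEq ι] [Fintype Z] (p : ι → Z → ℝ)

theorem sum_prod_mul_prod (f : ι → Z → ℝ) :
    ∑ x : ι → Z, (∏ i, p i (x i)) * ∏ i, f i (x i) = ∏ i, ∑ w, p i w * f i w := by
  simp_rw [← prod_mul_distrib]
  exact (Fintype.prod_sum fun i w => p i w * f i w).symm

variable {p}

theorem sum_prod_eq_one (hp : ∀ i, ∑ w, p i w = 1) :
    ∑ x : ι → Z, ∏ i, p i (x i) = 1 := by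
  rw [← Fintype.prod_sum p]
  simp [hp]

theorem sum_prod_mul_apply (hp : ∀ i, ∑ w, p i w = 1) (i : ι) (f : Z → ℝ) :
    ∑ x : ι → Z, (∏ j, p j (x j)) * f (x i) = ∑ w, p i w * f w := by
  calc ∑ x : ι → Z, (∏ j, p j (x j)) * f (x i)
      = ∑ x : ι → Z, (∏ j, p j (x j)) * ∏ j, (if j = i then f else 1) (x j) := by
        refine sum_congr rfl fun x _ => congrArg _ ?_
        rw [Fintype.prod_eq_single i fun j hj => by simp [hj]]
        simp
    _ = ∏ j, ∑ w, p j w * (if j = i then f else 1) w := sum_prod_mul_prod p _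
    _ = ∑ w, p i w * f w := by
        rw [Fintype.prod_eq_single i fun j hj => by simp [hj, hp]]
        simp

theorem sum_prod_mul_apply_mul_apply (hp : ∀ i, ∑ w, p i w = 1) {i k : ι} (hik : i ≠ k)
    (f g : Z → ℝ) :
    ∑ x : ι → Z, (∏ j, p j (x j)) * (f (x i) * g (x k))
      = (∑ w, p i w * f w) * ∑ w, p k w * g w := by
  calc ∑ x : ι → Z, (∏ j, p j (x j)) * (f (x i) * g (x k))
      = ∑ x : ι → Z, (∏ j, p j (x j)) *
          ∏ j, (if j = i then f else if j = k then g else 1) (x j) := by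
        refine sum_congr rfl fun x _ => congrArg _ ?_
        rw [Fintype.prod_eq_mul i k hik fun j hj => by simp [hj.1, hj.2]]
        simp [hik.symm]
    _ = ∏ j, ∑ w, p j w * (if j = i then f else if j = k then g else 1) w :=
        sum_prod_mul_prod p _
    _ = (∑ w, p i w * f w) * ∑ w, p k w * g w := by
        rw [Fintype.prod_eq_mul i k hik fun j hj => by simp [hj.1, hj.2, hp]]
        simp [hik.symm]

theorem sum_prod_mul_sum_apply (hp : ∀ i, ∑ w, p i w = 1) (g : ι → Z → ℝ) :
    ∑ x : ι → Z, (∏ j, p j (x j)) * ∑ i, g i (x i) = ∑ i, ∑ w, p i w * g i w := by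
  simp_rw [mul_sum]
  rw [sum_comm]
  exact sum_congr rfl fun i _ => sum_prod_mul_apply hp i (g i)

theorem sum_prod_mul_sum_apply_sq (hp : ∀ i, ∑ w, p i w = 1) (g : ι → Z → ℝ)
    (hg : ∀ i, ∑ w, p i w * g i w = 0) :
    ∑ x : ι → Z, (∏ j, p j (x j)) * (∑ i, g i (x i)) ^ 2
      = ∑ i, ∑ w, p i w * g i w ^ 2 := by
  calc ∑ x : ι → Z, (∏ j, p j (x j)) * (∑ i, g i (x i)) ^ 2
      = ∑ i, ∑ k, ∑ x : ι → Z, (∏ j, p j (x j)) * (g i (x i) * g k (x k)) := by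
        simp_rw [sq, sum_mul_sum, mul_sum]
        rw [sum_comm]
        exact sum_congr rfl fun i _ => sum_comm
    _ = ∑ i, ∑ k, if i = k then ∑ w, p i w * g i w ^ 2 else 0 := by
        refine sum_congr rfl fun i _ => sum_congr rfl fun k _ => ?_
        split_ifs with hik
        · subst hik
          simp_rw [← sq]
          exact sum_prod_mul_apply hp i fun w => g i w ^ 2
        · rw [sum_prod_mul_apply_mul_apply hp hik, hg, zero_mul]
    _ = ∑ i, ∑ w, p i w * g i w ^ 2 := by simp

end ProductWeights

theorem sum_mul_sqrt_le_sqrt_sum_mul {α : Type*} [Fintype α] {P f : α → ℝ}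
    (hP0 : ∀ x, 0 ≤ P x) (hP1 : ∑ x, P x = 1) (hf : ∀ x, 0 ≤ f x) :
    ∑ x, P x * √(f x) ≤ √(∑ x, P x * f x) :=
  Real.strictConcaveOn_sqrt.concaveOn.le_map_sum (fun x _ => hP0 x) hP1 fun x _ => hf x

section TypeOf

variable {Z : Type*} [DecidableEq Z] {m : ℕ}

theorem typeOf_apply_eq_sum_ite (y : Fin m → Z) (w : Z) :
    typeOf y w = (∑ i, if y i = w then (1 : ℝ) else 0) / m := by
  simp [typeOf, sum_boole]

theorem sum_typeOf_mul [Fintype Z] (z : Fin m → Z) (f : Z → ℝ) :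
    ∑ a, typeOf z a * f a = (∑ i, f (z i)) / m := by
  rw [← sum_fiberwise univ z fun i => f (z i), sum_div]
  refine sum_congr rfl fun a _ => ?_
  rw [sum_congr rfl fun i hi => congrArg f (mem_filter.mp hi).2]
  simp [typeOf, div_mul_eq_mul_div]

theorem sum_mul_typeOf [Fintype Z] (A : Z → Z → ℝ) (z : Fin m → Z) (w : Z) :
    ∑ a, A w a * typeOf z a = (∑ i, A w (z i)) / m := by
  simp_rw [mul_comm (A w _), sum_typeOf_mul]

theorem typeOf_sub_sum_mul_typeOf [Fintype Z] (A : Z → Z → ℝ) (y z : Fin m → Z) (w : Z) :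
    typeOf y w - ∑ a, A w a * typeOf z a
      = ∑ i, ((if y i = w then (1 : ℝ) else 0) - A w (z i)) / m := by
  rw [typeOf_apply_eq_sum_ite, sum_mul_typeOf, ← sub_div, ← sum_sub_distrib, sum_div]

end TypeOf

section Bernoulli

variable {Z : Type*} [Fintype Z] {q : Z → ℝ}

theorem sum_mul_one_sub_le_one (hq : ∑ w, q w = 1) : ∑ w, q w * (1 - q w) ≤ 1 := by
  have : ∑ w, q w * (1 - q w) = 1 - ∑ w, q w ^ 2 := by
    simp_rw [mul_sub, mul_one, sum_sub_distrib, hq, sq]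
  rw [this]
  linarith [sum_nonneg fun w (_ : w ∈ univ) => sq_nonneg (q w)]

variable [DecidableEq Z]

theorem sum_mul_indicator_sub (hq : ∑ v, q v = 1) (w : Z) :
    ∑ v, q v * ((if v = w then 1 else 0) - q w) = 0 := by
  simp [mul_sub, sum_sub_distrib, ← sum_mul, hq]

theorem sum_mul_indicator_sub_sq (hq : ∑ v, q v = 1) (w : Z) :
    ∑ v, q v * ((if v = w then 1 else 0) - q w) ^ 2 = q w * (1 - q w) := by
  have h : ∀ v, q v * ((if v = w then 1 else 0) - q w) ^ 2
      = (if v = w then q w * (1 - 2 * q w) else 0) + q v * q w ^ 2 := by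
    intro v
    split_ifs with hv
    · subst hv; ring
    · ring
  rw [sum_congr rfl fun v _ => h v, sum_add_distrib, sum_ite_eq', ← sum_mul, hq]
  simp only [mem_univ, if_true]
  ring

end Bernoulli

section Perturbation

variable {Z : Type*} [Fintype Z] [DecidableEq Z] {m : ℕ} {A : Z → Z → ℝ}

theorem sum_prod_mul_typeOf (hcol : ∀ a, ∑ w, A w a = 1) (z : Fin m → Z) (w : Z) :
    ∑ y : Fin m → Z, (∏ i, A (y i) (z i)) * typeOf y w = ∑ a, A w a * typeOf z a := by
  rw [sum_mul_typeOf, sum_div]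
  simp_rw [typeOf_apply_eq_sum_ite, sum_div]
  rw [sum_prod_mul_sum_apply (p := fun i v => A v (z i)) (fun i => hcol (z i))
    fun _ v => (if v = w then 1 else 0) / m]
  simp [mul_div_assoc', ← sum_div]

theorem sum_prod_mul_typeOf_sub_sq (hcol : ∀ a, ∑ w, A w a = 1) (z : Fin m → Z) (w : Z) :
    ∑ y : Fin m → Z, (∏ i, A (y i) (z i)) * (typeOf y w - ∑ a, A w a * typeOf z a) ^ 2
      = (∑ i, A w (z i) * (1 - A w (z i))) / m ^ 2 := by
  simp_rw [typeOf_sub_sum_mul_typeOf]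
  rw [sum_prod_mul_sum_apply_sq (p := fun i v => A v (z i)) (fun i => hcol (z i))
    fun i v => ((if v = w then 1 else 0) - A w (z i)) / m, sum_div]
  · simp_rw [div_pow, mul_div_assoc', ← sum_div, sum_mul_indicator_sub_sq (hcol _)]
  · simp_rw [mul_div_assoc', ← sum_div, sum_mul_indicator_sub (hcol _), zero_div, implies_true]

theorem sum_prod_mul_sum_typeOf_sub_sq_le (hcol : ∀ a, ∑ w, A w a = 1) (z : Fin m → Z) :
    ∑ y : Fin m → Z, (∏ i, A (y i) (z i)) * ∑ w, (typeOf y w - ∑ a, A w a * typeOf z a) ^ 2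
      ≤ 1 / m := by
  calc _ = ∑ w, ∑ y : Fin m → Z,
          (∏ i, A (y i) (z i)) * (typeOf y w - ∑ a, A w a * typeOf z a) ^ 2 := by
        simp_rw [mul_sum]
        exact sum_comm
    _ = (∑ i, ∑ w, A w (z i) * (1 - A w (z i))) / m ^ 2 := by
        simp_rw [sum_prod_mul_typeOf_sub_sq hcol]
        rw [← sum_div, sum_comm]
    _ ≤ (∑ _i : Fin m, (1 : ℝ)) / m ^ 2 := by
        gcongr with i
        exact sum_mul_one_sub_le_one (hcol _)
    _ = 1 / m := by simp [sq, div_self_mul_self']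

end Perturbation

theorem perturbed_type_mean_variance_error_general
    {Z : Type*} [Fintype Z] [DecidableEq Z] (m : ℕ)
    (A : Z → Z → ℝ) (hA0 : ∀ w z, 0 ≤ A w z)
    (hcol : ∀ z, ∑ w, A w z = 1) (z : Fin m → Z) :
    (∀ w : Z,
      (∑ what : Fin m → Z, (∏ i, A (what i) (z i)) * typeOf what w)
        = ∑ z' : Z, A w z' * typeOf z z') ∧
    (∀ w : Z,
      (∑ what : Fin m → Z, (∏ i, A (what i) (z i)) *
          (typeOf what w - ∑ z' : Z, A w z' * typeOf z z') ^ 2)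
        = (1 / (m : ℝ)) * ∑ z' : Z, typeOf z z' * A w z' * (1 - A w z')) ∧
    (∑ what : Fin m → Z, (∏ i, A (what i) (z i)) *
        Real.sqrt (∑ w : Z, (typeOf what w - ∑ z' : Z, A w z' * typeOf z z') ^ 2))
      ≤ 1 / Real.sqrt m := by
  refine ⟨sum_prod_mul_typeOf hcol z, fun w => ?_, ?_⟩
  · simp_rw [sum_prod_mul_typeOf_sub_sq hcol, mul_assoc, sum_typeOf_mul]
    ring
  · calc ∑ y : Fin m → Z, (∏ i, A (y i) (z i)) *
          √(∑ w, (typeOf y w - ∑ a, A w a * typeOf z a) ^ 2)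
        ≤ √(∑ y : Fin m → Z, (∏ i, A (y i) (z i)) *
          ∑ w, (typeOf y w - ∑ a, A w a * typeOf z a) ^ 2) :=
          sum_mul_sqrt_le_sqrt_sum_mul (fun y => prod_nonneg fun i _ => hA0 _ _)
            (sum_prod_eq_one (p := fun i v => A v (z i)) fun i => hcol (z i))
            fun y => sum_nonneg fun w _ => sq_nonneg _
      _ ≤ √(1 / m) := Real.sqrt_le_sqrt (sum_prod_mul_sum_typeOf_sub_sq_le hcol z)
      _ = 1 / √m := by rw [one_div, Real.sqrt_inv, one_div]

/-- Mean, variance, and expected ℓ2 error of the type of independently perturbed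
data: if each `Ŵ_i` is drawn independently with `P(Ŵ_i = w) = A[w, z_i]` for a
column-stochastic matrix `A` with entries in `[0,1]`, then
`E[T_Ŵ(w)] = (A·T_z)(w)`,
`Var[T_Ŵ(w)] = (1/m)·∑_{z'} T_z(z')·A[w,z']·(1 - A[w,z'])`, and
`E‖T_Ŵ - A·T_z‖₂ ≤ 1/√m`. -/
theorem perturbed_type_mean_variance_error
    {Z : Type*} [Fintype Z] [DecidableEq Z] (m : ℕ) (hm : 1 ≤ m)
    (A : Z → Z → ℝ) (hA0 : ∀ w z, 0 ≤ A w z) (hA1 : ∀ w z, A w z ≤ 1)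
    (hcol : ∀ z, ∑ w, A w z = 1) (z : Fin m → Z) :
    (∀ w : Z,
      (∑ what : Fin m → Z, (∏ i, A (what i) (z i)) * typeOf what w)
        = ∑ z' : Z, A w z' * typeOf z z') ∧
    (∀ w : Z,
      (∑ what : Fin m → Z, (∏ i, A (what i) (z i)) *
          (typeOf what w - ∑ z' : Z, A w z' * typeOf z z') ^ 2)
        = (1 / (m : ℝ)) * ∑ z' : Z, typeOf z z' * A w z' * (1 - A w z')) ∧
    (∑ what : Fin m → Z, (∏ i, A (what i) (z i)) *
        Real.sqrt (∑ w : Z, (typeOf what w - ∑ z' : Z, A w z' * typeOf z z') ^ 2))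
      ≤ 1 / Real.sqrt m :=
  perturbed_type_mean_variance_error_general m A hA0 hcol z
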